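/- Let S be a set of elements of ℤ² that are primitive (gcd of the coordinates is 1), considered up to sign (i.e., (p,q) and (−p,−q) are identified), with distinct elements of S pairwise satisfying |p·s − q·r| ≤ 10 for representatives (p,q) and (r,s). Then S has at most 12 elements. -/
import Mathlib

/-- Primitive integer vectors with zero cross product are equal up to sign. -/
lemma primitive_det_zero (p q r s : ℤ) (hpq : Int.gcd p q = 1) (hrs : Int.gcd r s = 1)
    (h : p * s - q * r = 0) : (r, s) = (p, q) ∨ (r, s) = (-p, -q) := by
  have hcp : IsCoprime p q := Int.isCoprime_iff_gcd_eq_one.mpr hpq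
  have hcr : IsCoprime r s := Int.isCoprime_iff_gcd_eq_one.mpr hrs
  have hps : p * s = q * r := by linarith
  have hpr : p ∣ r := hcp.dvd_of_dvd_mul_left ⟨s, hps.symm⟩
  have hrp : r ∣ p := hcr.dvd_of_dvd_mul_left ⟨q, by linarith⟩
  have hqs : q ∣ s := hcp.symm.dvd_of_dvd_mul_left ⟨r, by linarith⟩
  have hsq : s ∣ q := hcr.symm.dvd_of_dvd_mul_left ⟨p, by linarith⟩
  have h1 : p = r ∨ p = -r := Int.associated_iff.mp (associated_of_dvd_dvd hpr hrp)
  have h2 : q = s ∨ q = -s := Int.associated_iff.mp (associated_of_dvd_dvd hqs hsq)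
  rcases h1 with h1 | h1 <;> rcases h2 with h2 | h2
  · left; rw [← h1, ← h2]
  · -- p = r, q = -s
    have h0 : 2 * (r * s) = 0 := by linear_combination hps - s * h1 + r * h2
    have h0' : r * s = 0 := by linarith
    rcases mul_eq_zero.mp h0' with hc | hc
    · right
      have e1 : r = -p := by omega
      have e2 : s = -q := by omega
      rw [e1, e2]
    · left
      have e1 : r = p := by omega
      have e2 : s = q := by omega
      rw [e1, e2]
  · -- p = -r, q = s
    have h0 : 2 * (r * s) = 0 := by linear_combination -hps + s * h1 - r * h2
    have h0' : r * s = 0 := by linarith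
    rcases mul_eq_zero.mp h0' with hc | hc
    · left
      have e1 : r = p := by omega
      have e2 : s = q := by omega
      rw [e1, e2]
    · right
      have e1 : r = -p := by omega
      have e2 : s = -q := by omega
      rw [e1, e2]
  · right
    have e1 : r = -p := by omega
    have e2 : s = -q := by omega
    rw [e1, e2]

/-- A finite set of primitive classes in `ℤ²`, containing at most one of each `±` pair,
with pairwise distance `|ps − qr| ≤ 10`, has at most 12 elements. -/
theorem slopes_pairwise_distance_le_ten_card_le_twelve (S : Finset (ℤ × ℤ))
    (hprim : ∀ a ∈ S, Int.gcd a.1 a.2 = 1)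
    (hsign : ∀ a ∈ S, (-a.1, -a.2) ∉ S)
    (hdist : ∀ a ∈ S, ∀ b ∈ S, a ≠ b → |a.1 * b.2 - a.2 * b.1| ≤ 10) :
    S.card ≤ 12 := by
  classical
  haveI : Fact (Nat.Prime 11) := ⟨by norm_num⟩
  set f : ℤ × ℤ → Option (ZMod 11) := fun a =>
    if (a.2 : ZMod 11) = 0 then none else some ((a.1 : ZMod 11) / (a.2 : ZMod 11)) with hf
  have hinj : Set.InjOn f S := by
    intro a ha b hb hab
    by_contra hne
    have hdet11 : (11 : ℤ) ∣ (a.1 * b.2 - a.2 * b.1) := by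
      apply (ZMod.intCast_zmod_eq_zero_iff_dvd _ 11).mp
      push_cast
      simp only [hf] at hab
      by_cases h2 : ((a.2 : ℤ) : ZMod 11) = 0
      · by_cases h3 : ((b.2 : ℤ) : ZMod 11) = 0
        · rw [h2, h3]; ring
        · rw [if_pos h2, if_neg h3] at hab
          exact absurd hab (by simp)
      · by_cases h3 : ((b.2 : ℤ) : ZMod 11) = 0
        · rw [if_neg h2, if_pos h3] at hab
          exact absurd hab (by simp)
        · rw [if_neg h2, if_neg h3, Option.some_inj] at hab
          linear_combination (div_eq_div_iff h2 h3).mp hab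
    have habs := hdist a ha b hb hne
    have hdet0 : a.1 * b.2 - a.2 * b.1 = 0 := by
      rcases abs_le.mp habs with ⟨hl, hr⟩
      omega
    rcases primitive_det_zero a.1 a.2 b.1 b.2 (hprim a ha) (hprim b hb) hdet0 with h | h
    · have hb' : b = (a.1, a.2) := by rcases b with ⟨b1, b2⟩; exact h
      exact hne (by rw [hb'])
    · have hb' : b = (-a.1, -a.2) := by rcases b with ⟨b1, b2⟩; exact h
      exact hsign a ha (hb' ▸ hb)
  calc S.card ≤ Fintype.card (Option (ZMod 11)) := by
        have := Finset.card_le_card_of_injOn f (fun _ _ => Finset.mem_univ _) hinj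
        simpa using this
    _ = 12 := by simp
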